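/- arXiv:1612.05127 — 4 statements merged into one kernel-verified Lean document; each statement's English description precedes it below -/
import Mathlib

section
/- Let (Sᵢ)_{i∈I} be a family of right LCM monoids and S = ⊕_{i∈I} Sᵢ. Two elements s = (sᵢ), t = (tᵢ) of S are core related (i.e., sa = tb for some a,b ∈ S_c) if and only if for every i ∈ I the components sᵢ and tᵢ are core related in Sᵢ. -/
section RightLCMBasics
variable (S : Type*) [Monoid S]

/-- The principal right ideal `sS`. -/
def pIdeal {S : Type*} [Monoid S] (s : S) : Set S := Set.range (fun r => s * r)

/-- `s ⊥ t` : the principal right ideals are disjoint. -/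
def Orth {S : Type*} [Monoid S] (s t : S) : Prop := pIdeal s ∩ pIdeal t = ∅

/-- Left cancellativity. -/
def LeftCancellative : Prop := ∀ a b c : S, a * b = a * c → b = c

/-- Right LCM property: intersections of principal right ideals are empty or principal. -/
def IsRightLCM : Prop :=
  ∀ s t : S, pIdeal s ∩ pIdeal t = ∅ ∨ ∃ r : S, pIdeal s ∩ pIdeal t = pIdeal r

/-- The core subsemigroup `S_c`. -/
def core : Set S := {a | ∀ s : S, ¬ Orth a s}

/-- The core relation `s ∼ t` : `sa = tb` for some core elements `a, b`. -/
def coreRel {S : Type*} [Monoid S] (s t : S) : Prop :=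
  ∃ a ∈ core S, ∃ b ∈ core S, s * a = t * b

/-- A (finite) foundation set. -/
def IsFoundationSet {S : Type*} [Monoid S] (F : Set S) : Prop :=
  F.Finite ∧ ∀ s : S, ∃ f ∈ F, ¬ Orth f s

/-- Accuracy: distinct elements are mutually orthogonal. -/
def Accurate {S : Type*} [Monoid S] (F : Set S) : Prop :=
  ∀ f ∈ F, ∀ g ∈ F, f ≠ g → Orth f g

/-- Property (AR): every foundation set admits an accurate refinement. -/
def HasAR : Prop :=
  ∀ F : Set S, IsFoundationSet F →
    ∃ F' : Set S, IsFoundationSet F' ∧ Accurate F' ∧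
      F' ⊆ {x | ∃ f ∈ F, ∃ r : S, x = f * r}

end RightLCMBasics

/-- The direct sum (restricted product) of a family of monoids, as the submonoid of
finitely supported elements of the full product. -/
def finSupp {I : Type*} (S : I → Type*) [∀ i, Monoid (S i)] : Submonoid (∀ i, S i) where
  carrier := {f | {i | f i ≠ 1}.Finite}
  one_mem' := by simp
  mul_mem' := by
    intro a b ha hb
    refine (ha.union hb).subset ?_
    intro i hi
    by_contra h
    simp only [Set.mem_union, Set.mem_setOf_eq, not_or, not_not] at h
    exact hi (by simp [Pi.mul_apply, h.1, h.2])

/-! Both directions are componentwise: a witness in `⊕ Sᵢ` restricts to witnesses in each `Sᵢ`,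
and conversely witnesses chosen in each `Sᵢ` can be taken to be `1` wherever both given elements
are `1`, so they assemble to finitely supported families. Testing a core element of the sum
against `Pi.mulSingle i s` shows that its components are core elements. -/

lemma not_orth_iff {S : Type*} [Monoid S] (a s : S) :
    ¬ Orth a s ↔ ∃ r r' : S, a * r = s * r' := by
  rw [Orth, ← ne_eq, ← Set.nonempty_iff_ne_empty]
  constructor
  · rintro ⟨x, ⟨r, hr⟩, ⟨r', hr'⟩⟩
    exact ⟨r, r', hr.trans hr'.symm⟩
  · rintro ⟨r, r', h⟩
    exact ⟨a * r, ⟨r, rfl⟩, ⟨r', h.symm⟩⟩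

lemma one_mem_core {S : Type*} [Monoid S] : (1 : S) ∈ core S :=
  fun s => (not_orth_iff 1 s).mpr ⟨s, 1, by simp⟩

namespace finSupp

variable {I : Type*} {S : I → Type*} [∀ i, Monoid (S i)]

lemma mulSingle_mem [DecidableEq I] (i : I) (x : S i) : Pi.mulSingle i x ∈ finSupp S :=
  (Set.finite_singleton i).subset fun j hj => by
    by_contra hji
    exact hj (Pi.mulSingle_eq_of_ne hji x)

lemma exists_pair_of_forall {P : ∀ i, S i → S i → S i → S i → Prop}
    (f g : finSupp S) (hone : ∀ i, P i 1 1 1 1)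
    (h : ∀ i, ∃ p q, P i ((f : ∀ i, S i) i) ((g : ∀ i, S i) i) p q) :
    ∃ p q : finSupp S, ∀ i,
      P i ((f : ∀ i, S i) i) ((g : ∀ i, S i) i) ((p : ∀ i, S i) i) ((q : ∀ i, S i) i) := by
  have h' : ∀ i, ∃ pq : S i × S i, P i ((f : ∀ i, S i) i) ((g : ∀ i, S i) i) pq.1 pq.2 ∧
      ((f : ∀ i, S i) i = 1 → (g : ∀ i, S i) i = 1 → pq = 1) := by
    intro i
    by_cases hfg : (f : ∀ i, S i) i = 1 ∧ (g : ∀ i, S i) i = 1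
    · refine ⟨1, ?_, fun _ _ => rfl⟩
      simpa only [hfg.1, hfg.2, Prod.fst_one, Prod.snd_one] using hone i
    · obtain ⟨p, q, hpq⟩ := h i
      exact ⟨(p, q), hpq, fun hf hg => (hfg ⟨hf, hg⟩).elim⟩
  choose pq hP hpq_one using h'
  have hsupp : {i | pq i ≠ 1}.Finite := (f.2.union g.2).subset fun i hi => by
    by_contra hfg
    simp only [Set.mem_union, Set.mem_ofPred_eq, not_or, not_not] at hfg
    exact hi (hpq_one i hfg.1 hfg.2)
  refine ⟨⟨fun i => (pq i).1, hsupp.subset ?_⟩, ⟨fun i => (pq i).2, hsupp.subset ?_⟩, hP⟩ <;>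
  · intro i hi hpq
    simp [hpq] at hi

lemma mem_core_iff (a : finSupp S) :
    a ∈ core (finSupp S) ↔ ∀ i, (a : ∀ i, S i) i ∈ core (S i) := by
  classical
  constructor
  · intro ha i x
    obtain ⟨r, r', hr⟩ := (not_orth_iff a ⟨_, mulSingle_mem i x⟩).mp (ha _)
    refine (not_orth_iff _ _).mpr ⟨(r : ∀ i, S i) i, (r' : ∀ i, S i) i, ?_⟩
    simpa using congrFun (congrArg Subtype.val hr) i
  · intro ha s
    obtain ⟨r, r', hr⟩ := exists_pair_of_forall (P := fun _ x y p q => x * p = y * q) a s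
      (fun _ => rfl) fun i => (not_orth_iff _ _).mp (ha i _)
    exact (not_orth_iff _ _).mpr ⟨r, r', Subtype.ext (funext hr)⟩

end finSupp

theorem coreRel_of_direct_sum_general {I : Type*} (S : I → Type*) [∀ i, Monoid (S i)] :
    ∀ f g : ↥(finSupp S),
      coreRel f g ↔ ∀ i : I, coreRel ((f : ∀ i, S i) i) ((g : ∀ i, S i) i) := by
  intro f g
  constructor
  · rintro ⟨a, ha, b, hb, hab⟩ i
    exact ⟨_, (finSupp.mem_core_iff a).mp ha i, _, (finSupp.mem_core_iff b).mp hb i,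
      congrFun (congrArg Subtype.val hab) i⟩
  · intro h
    obtain ⟨a, b, hab⟩ := finSupp.exists_pair_of_forall
      (P := fun i x y p q => p ∈ core (S i) ∧ q ∈ core (S i) ∧ x * p = y * q) f g
      (fun _ => ⟨one_mem_core, one_mem_core, rfl⟩)
      fun i => by
        obtain ⟨a, ha, b, hb, hab⟩ := h i
        exact ⟨a, b, ha, hb, hab⟩
    exact ⟨a, (finSupp.mem_core_iff a).mpr fun i => (hab i).1,
      b, (finSupp.mem_core_iff b).mpr fun i => (hab i).2.1,
      Subtype.ext (funext fun i => (hab i).2.2)⟩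

/-- Proposition 3.1(ii): two elements of a direct sum of right LCM monoids are core
related iff they are componentwise core related. -/
theorem coreRel_of_direct_sum {I : Type*} (S : I → Type*) [∀ i, Monoid (S i)]
    (hlc : ∀ i, LeftCancellative (S i)) (hlcm : ∀ i, IsRightLCM (S i)) :
    ∀ f g : ↥(finSupp S),
      coreRel f g ↔ ∀ i : I, coreRel ((f : ∀ i, S i) i) ((g : ∀ i, S i) i) :=
  coreRel_of_direct_sum_general S
end

section
/- Let M be a free abelian monoid and, for each i in a nonempty index set I, let mᵢ satisfy 2 ≤ mᵢ < ∞. The monoid S = M ⊕ ⊕_{i∈I} F⁺_{mᵢ} admits a generalised scale if and only if the family (mᵢ) is rationally independent, i.e., for distinct finitely supported k, k' ∈ ⊕_{i∈I} ℕ the supernatural numbers ∏ᵢ mᵢ^{kᵢ} and ∏ᵢ mᵢ^{k'ᵢ} are distinct. In that case the generalised scale is unique and restricts to the unique generalised scale on each F⁺_{mᵢ}. -/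
/-- The canonical inclusion of a single coordinate into the direct sum. -/
def dsOf {I : Type*} (S : I → Type*) [∀ i, Monoid (S i)] [DecidableEq I] (i : I) (w : S i) :
    ↥(finSupp S) :=
  ⟨Pi.mulSingle i w, (Set.finite_singleton i).subset (fun j hj => by
    simp only [Set.mem_singleton_iff]
    by_contra h
    exact hj (Pi.mulSingle_eq_of_ne h w))⟩

/-- A minimal complete set (transversal) of representatives for `N⁻¹(n)/∼`. -/
def IsTransversal {S : Type*} [Monoid S] (N : S →* ℕ) (n : ℕ) (T : Set S) : Prop :=
  (∀ t ∈ T, N t = n) ∧ (∀ s : S, N s = n → ∃ t ∈ T, coreRel s t) ∧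
  (∀ t ∈ T, ∀ t' ∈ T, coreRel t t' → t = t')

/-- A generalised scale: a nontrivial homomorphism into `(ℕ₊, ·)` such that `N⁻¹(n)/∼`
has exactly `n` elements and every minimal complete set of representatives of
`N⁻¹(n)/∼` is an accurate foundation set, for every `n` in the image of `N`. -/
def IsGenScale {S : Type*} [Monoid S] (N : S →* ℕ) : Prop :=
  (∀ s : S, N s ≠ 0) ∧ (∃ s : S, N s ≠ 1) ∧
  ∀ n ∈ Set.range N,
    (∃ T : Set S, IsTransversal N n T ∧ T.Finite ∧ T.ncard = n) ∧
    (∀ T : Set S, IsTransversal N n T → Accurate T ∧ IsFoundationSet T)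

/-!
Orthogonality in `M × ⊕ᵢ F⁺(αᵢ)` with `M` commutative only sees the words: `s ⊥ t` iff in some
coordinate the words of `s` and `t` are prefix-incomparable. Hence the core is `M × {1}` and
`s ∼ t` iff `s.2 = t.2`. A generalised scale `N` is then trivial on `M`, and if `a` is a letter of
`F⁺(αᵢ)` with minimal `N`-value, a transversal of `N⁻¹(N a)` must consist of exactly the letters of
`αᵢ`, so `N a = |αᵢ|`; thus `N` is the length scale `w ↦ ∏ᵢ |αᵢ| ^ |wᵢ|`. When the `|αᵢ|` are
rationally independent, a level set of this scale is the set of word tuples with a fixed length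
profile, an accurate foundation set of the right size. Otherwise two profiles `k ≠ k'` have the
same value, and padding one word tuple to both profiles gives comparable representatives of two
distinct classes, contradicting accuracy.
-/

open FreeMonoid

section Orthogonality

variable {S : Type*} [Monoid S]

theorem Accurate.subset_singleton_of_mem_core {T : Set S} (hT : Accurate T) {t : S}
    (ht : t ∈ T) (hcore : t ∈ core S) : T ⊆ {t} := fun t' ht' =>
  Set.mem_singleton_iff.2 <| by_contra fun hne => hcore t' (hT t ht t' ht' (Ne.symm hne))

theorem IsFoundationSet.mem_core_of_singleton {t : S} (h : IsFoundationSet {t}) :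
    t ∈ core S := fun s => by
  obtain ⟨f, rfl, hf⟩ := h.2 s
  exact hf

theorem not_orth_of_comm {A : Type*} [CommMonoid A] (a b : A) : ¬ Orth a b := fun h =>
  (Set.eq_empty_iff_forall_notMem.1 h) (a * b) ⟨⟨b, rfl⟩, ⟨a, mul_comm b a⟩⟩

theorem pIdeal_prod {A B : Type*} [Monoid A] [Monoid B] (s : A × B) :
    pIdeal s = pIdeal s.1 ×ˢ pIdeal s.2 := by
  ext z
  constructor
  · rintro ⟨r, rfl⟩
    exact ⟨⟨r.1, rfl⟩, ⟨r.2, rfl⟩⟩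
  · rintro ⟨⟨r₁, h₁⟩, ⟨r₂, h₂⟩⟩
    exact ⟨(r₁, r₂), Prod.ext h₁ h₂⟩

theorem orth_prod_iff {A B : Type*} [Monoid A] [Monoid B] {s t : A × B} :
    Orth s t ↔ Orth s.1 t.1 ∨ Orth s.2 t.2 := by
  simp only [Orth, pIdeal_prod, Set.prod_inter_prod, Set.prod_eq_empty_iff]

theorem orth_prod_iff_of_comm {A B : Type*} [CommMonoid A] [Monoid B] {s t : A × B} :
    Orth s t ↔ Orth s.2 t.2 := by
  simp only [orth_prod_iff, not_orth_of_comm, false_or]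

theorem core_prod_of_comm {A B : Type*} [CommMonoid A] [Monoid B] :
    core (A × B) = Prod.snd ⁻¹' core B := by
  ext s
  simp only [core, Set.mem_ofPred_eq, Set.mem_preimage, orth_prod_iff_of_comm]
  exact ⟨fun h b => h (1, b), fun h t => h t.2⟩

end Orthogonality

abbrev FreeSum {I : Type*} (α : I → Type*) := ↥(finSupp fun i => FreeMonoid (α i))

namespace FreeSum

variable {I : Type*} {α : I → Type*}

def word (w : FreeSum α) (i : I) : List (α i) := toList (w.1 i)

def ofWords (f : ∀ i, List (α i)) (hf : {i | f i ≠ []}.Finite) : FreeSum α :=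
  ⟨fun i => ofList (f i), hf⟩

@[simp] theorem word_ofWords (f : ∀ i, List (α i)) (hf : {i | f i ≠ []}.Finite) (i : I) :
    word (ofWords f hf) i = f i :=
  rfl

@[simp] theorem word_mul (w u : FreeSum α) (i : I) : word (w * u) i = word w i ++ word u i :=
  rfl

@[simp] theorem word_one (i : I) : word (1 : FreeSum α) i = [] := rfl

@[ext] theorem ext {w u : FreeSum α} (h : ∀ i, word w i = word u i) : w = u :=
  Subtype.ext (funext h)

theorem finite_word_ne_nil (w : FreeSum α) : {i | word w i ≠ []}.Finite := w.2

theorem mem_pIdeal_iff {w u : FreeSum α} : u ∈ pIdeal w ↔ ∀ i, word w i <+: word u i := by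
  refine ⟨?_, fun h => ?_⟩
  · rintro ⟨v, rfl⟩ i
    exact List.prefix_append _ _
  · refine ⟨ofWords (fun i => (word u i).drop (word w i).length)
      ((finite_word_ne_nil u).subset fun i hi hu => hi (by simp [hu])), ext fun i => ?_⟩
    exact List.prefix_iff_eq_append.1 (h i)

theorem not_orth_iff {w u : FreeSum α} :
    ¬ Orth w u ↔ ∀ i, word w i <+: word u i ∨ word u i <+: word w i := by
  classical
  rw [Orth, ← ne_eq, ← Set.nonempty_iff_ne_empty]
  refine ⟨fun ⟨z, hzw, hzu⟩ i => ?_, fun h => ?_⟩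
  · exact List.prefix_or_prefix_of_prefix (mem_pIdeal_iff.1 hzw i) (mem_pIdeal_iff.1 hzu i)
  · -- the coordinatewise longer word is a common right multiple
    let v := ofWords (fun i => if word w i <+: word u i then word u i else word w i)
      (((finite_word_ne_nil w).union (finite_word_ne_nil u)).subset fun i hi => by
        by_contra hc
        simp only [Set.mem_union, Set.mem_ofPred_eq, not_or, not_not] at hc
        simp [hc] at hi)
    refine ⟨v, mem_pIdeal_iff.2 fun i => ?_, mem_pIdeal_iff.2 fun i => ?_⟩ <;>
      simp only [v, word_ofWords] <;> split_ifs with hp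
    exacts [hp, List.prefix_refl _, List.prefix_refl _, (h i).resolve_left hp]

theorem exists_word_ne_nil {w : FreeSum α} (hw : w ≠ 1) : ∃ i, word w i ≠ [] := by
  by_contra! h
  exact hw (ext fun i => h i)

noncomputable def lengths (w : FreeSum α) : I →₀ ℕ :=
  Finsupp.ofSupportFinite (fun i => (word w i).length)
    ((finite_word_ne_nil w).subset fun i hi hw => hi (by simp [hw]))

theorem lengths_apply (w : FreeSum α) (i : I) : lengths w i = (word w i).length := rfl

@[simp] theorem lengths_mul (w u : FreeSum α) : lengths (w * u) = lengths w + lengths u := by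
  ext i
  simp [lengths_apply]

theorem lengths_eq_zero {w : FreeSum α} : lengths w = 0 ↔ w = 1 := by
  refine ⟨fun h => ext fun i => List.eq_nil_of_length_eq_zero ?_, fun h => ?_⟩
  · rw [← lengths_apply, h, Finsupp.zero_apply]
  · ext i
    simp [lengths_apply, h]

section Coordinates

variable [DecidableEq I]

local notation "ι" => dsOf (fun i => FreeMonoid (α i))

theorem word_dsOf_self (i : I) (u : FreeMonoid (α i)) : word (ι i u) i = toList u := by
  simp [word, dsOf]

theorem word_dsOf_of_ne {i j : I} (h : j ≠ i) (u : FreeMonoid (α i)) : word (ι i u) j = [] := by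
  simp [word, dsOf, Pi.mulSingle_eq_of_ne h]

theorem lengths_dsOf (i : I) (u : FreeMonoid (α i)) :
    lengths (ι i u) = Finsupp.single i u.length := by
  ext j
  rcases eq_or_ne j i with rfl | h
  · simp only [lengths_apply, word_dsOf_self, Finsupp.single_eq_same]
    rfl
  · simp [lengths_apply, word_dsOf_of_ne h, Finsupp.single_eq_of_ne h]

theorem exists_eq_dsOf_mul {w : FreeSum α} {i : I} {c : α i} {r : List (α i)}
    (h : word w i = c :: r) : ∃ w', w = ι i (of c) * w' := by
  obtain ⟨w', hw'⟩ : w ∈ pIdeal (ι i (of c)) := mem_pIdeal_iff.2 fun j => by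
    rcases eq_or_ne j i with rfl | hj
    · simp [word_dsOf_self, h]
    · simp [word_dsOf_of_ne hj]
  exact ⟨w', hw'.symm⟩

@[elab_as_elim]
theorem induction_on {motive : FreeSum α → Prop} (w : FreeSum α) (one : motive 1)
    (dsOf_mul : ∀ i (a : α i) w, motive w → motive (ι i (of a) * w)) : motive w := by
  suffices ∀ n, ∀ w : FreeSum α, (lengths w).degree = n → motive w from this _ w rfl
  intro n
  induction n with
  | zero =>
    intro w hw
    rw [Finsupp.degree_eq_zero_iff, lengths_eq_zero] at hw
    exact hw ▸ one
  | succ n ih =>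
    intro w hw
    obtain ⟨i, hi⟩ := exists_word_ne_nil (w := w) fun h => by
      simp [lengths_eq_zero.2 h] at hw
    obtain ⟨c, r, hcr⟩ := List.exists_cons_of_ne_nil hi
    obtain ⟨w', rfl⟩ := exists_eq_dsOf_mul hcr
    refine dsOf_mul i c w' (ih w' ?_)
    rw [lengths_mul, map_add, lengths_dsOf, Finsupp.degree_single, length_of] at hw
    omega

theorem hom_ext {P : Type*} [Monoid P] {f g : FreeSum α →* P}
    (h : ∀ i (a : α i), f (ι i (of a)) = g (ι i (of a))) : f = g :=
  MonoidHom.ext fun w => by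
    induction w using induction_on with
    | one => simp only [map_one]
    | dsOf_mul i a w hw => simp only [map_mul, h, hw]

theorem core_eq_one [∀ i, Nontrivial (α i)] : core (FreeSum α) = {1} := by
  ext w
  refine ⟨fun hw => by_contra fun hne => ?_, ?_⟩
  · obtain ⟨i, hi⟩ := exists_word_ne_nil hne
    obtain ⟨c, r, hcr⟩ := List.exists_cons_of_ne_nil hi
    obtain ⟨b, hb⟩ := exists_ne c
    refine hw (ι i (of b)) (by_contra fun hno => ?_)
    have := not_orth_iff.1 hno i
    rw [hcr, word_dsOf_self, toList_of] at this
    rcases this with h | h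
    · exact hb (List.cons_prefix_cons.1 h).1.symm
    · exact hb (List.cons_prefix_cons.1 h).1
  · rintro rfl u
    exact not_orth_iff.2 fun i => Or.inl (by simp)

theorem dsOf_of_injective (i : I) : Function.Injective fun a : α i => ι i (of a) := by
  intro a b h
  simpa [word_dsOf_self] using congrArg (word · i) h

theorem eq_of_not_orth_dsOf_of {i : I} {a b : α i} (h : ¬ Orth (ι i (of a)) (ι i (of b))) :
    a = b := by
  have := not_orth_iff.1 h i
  simp only [word_dsOf_self, toList_of, List.cons_prefix_cons, List.prefix_refl, and_true] at this
  exact this.elim id Eq.symm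

theorem not_orth_dsOf_of_word_eq_nil {w : FreeSum α} {i : I} (h : word w i = [])
    (u : FreeMonoid (α i)) : ¬ Orth w (ι i u) :=
  not_orth_iff.2 fun j => by
    rcases eq_or_ne j i with rfl | hj
    · simp [h]
    · simp [word_dsOf_of_ne hj]

end Coordinates

theorem orth_of_lengths_eq {w u : FreeSum α} (h : lengths w = lengths u) (hne : w ≠ u) :
    Orth w u := by
  by_contra hno
  refine hne (ext fun i => ?_)
  have hlen : (word w i).length = (word u i).length := by rw [← lengths_apply, h, lengths_apply]
  rcases not_orth_iff.1 hno i with hp | hp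
  exacts [hp.eq_of_length hlen, (hp.eq_of_length hlen.symm).symm]

def pad (a : ∀ i, α i) (k : I →₀ ℕ) (u : FreeSum α) : FreeSum α :=
  ofWords (fun i => (word u i ++ List.replicate (k i - (word u i).length) (a i)).take (k i))
    (k.support.finite_toSet.subset fun i hi => by
      by_contra hk
      simp_all [Finsupp.notMem_support_iff.1 hk])

theorem lengths_pad (a : ∀ i, α i) (k : I →₀ ℕ) (u : FreeSum α) :
    lengths (pad a k u) = k := by
  ext i
  simp only [lengths_apply, pad, word_ofWords, List.length_take, List.length_append,
    List.length_replicate]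
  omega

theorem not_orth_pad (a : ∀ i, α i) (k : I →₀ ℕ) (u : FreeSum α) :
    ¬ Orth (pad a k u) u := by
  refine not_orth_iff.2 fun i => ?_
  simp only [pad, word_ofWords]
  rcases le_or_gt (word u i).length (k i) with h | h
  · rw [List.take_of_length_le (by simp only [List.length_append, List.length_replicate]; omega)]
    exact Or.inr (List.prefix_append _ _)
  · rw [List.take_append, Nat.sub_eq_zero_of_le h.le, List.take_zero, List.append_nil]
    exact Or.inl (List.take_prefix _ _)

def lengthsEqEquiv (k : I →₀ ℕ) :
    {w : FreeSum α | lengths w = k} ≃ ∀ i : k.support, List.Vector (α i) (k i) where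
  toFun w i := ⟨word w.1 i, by rw [← lengths_apply, w.2]⟩
  invFun f := ⟨ofWords (fun i => if h : k i = 0 then [] else (f ⟨i, by simpa using h⟩).1)
      (k.support.finite_toSet.subset fun i hi => by
        by_contra hk
        simp_all [Finsupp.notMem_support_iff.1 hk]),
    by
      ext i
      by_cases h : k i = 0 <;> simp [lengths_apply, h]⟩
  left_inv w := by
    refine Subtype.ext (ext fun i => ?_)
    by_cases h : k i = 0
    · simp only [word_ofWords, h, dite_true]
      rw [eq_comm, ← List.length_eq_zero_iff, ← lengths_apply, w.2, h]
    · simp [h]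
  right_inv f := by
    funext i
    apply Subtype.ext
    simp [Finsupp.mem_support_iff.1 i.2]

theorem ncard_lengths_eq [∀ i, Finite (α i)] (k : I →₀ ℕ) :
    {w : FreeSum α | lengths w = k}.ncard = k.prod fun i e => Nat.card (α i) ^ e := by
  rw [← Nat.card_coe_set_eq, Nat.card_congr (lengthsEqEquiv k), Nat.card_pi, Finsupp.prod,
    ← Finset.prod_coe_sort k.support fun i => Nat.card (α i) ^ k i]
  refine Finset.prod_congr rfl fun i _ => ?_
  rw [Nat.card_congr (Equiv.vectorEquivFin _ _), Nat.card_fun, Nat.card_fin]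

theorem finite_lengths_eq [∀ i, Finite (α i)] (k : I →₀ ℕ) :
    {w : FreeSum α | lengths w = k}.Finite :=
  Set.finite_coe_iff.1 (Finite.of_equiv _ (lengthsEqEquiv k).symm)

end FreeSum

open FreeSum

section Scale

variable {M : Type*} [Monoid M] {I : Type*} {α : I → Type*}

variable (M α) in
noncomputable def lengthScale : M × FreeSum α →* ℕ where
  toFun s := (lengths s.2).prod fun i e => Nat.card (α i) ^ e
  map_one' := by simp [lengths_eq_zero.2]
  map_mul' s t := by
    simp only [Prod.snd_mul, lengths_mul]
    exact Finsupp.prod_add_index' (fun i => pow_zero _) (fun i => pow_add _)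

theorem lengthScale_apply (s : M × FreeSum α) :
    lengthScale M α s = (lengths s.2).prod fun i e => Nat.card (α i) ^ e := rfl

theorem lengthScale_dsOf [DecidableEq I] (i : I) (u : FreeMonoid (α i)) :
    lengthScale M α (1, dsOf (fun i => FreeMonoid (α i)) i u) = Nat.card (α i) ^ u.length := by
  rw [lengthScale_apply, lengths_dsOf,
    Finsupp.prod_single_index (h := fun i e => Nat.card (α i) ^ e) (pow_zero _)]

end Scale

section Product

variable {M : Type*} [CommMonoid M] {I : Type*} [DecidableEq I] {α : I → Type*}

theorem core_prod_freeSum [∀ i, Nontrivial (α i)] : core (M × FreeSum α) = {s | s.2 = 1} := by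
  rw [core_prod_of_comm, core_eq_one]
  rfl

theorem coreRel_prod_freeSum_iff [∀ i, Nontrivial (α i)] {s t : M × FreeSum α} :
    coreRel s t ↔ s.2 = t.2 := by
  simp only [coreRel, core_prod_freeSum, Set.mem_ofPred_eq]
  refine ⟨fun ⟨a, ha, b, hb, h⟩ => ?_, fun h => ⟨(t.1, 1), rfl, (s.1, 1), rfl, ?_⟩⟩
  · simpa [ha, hb] using congrArg Prod.snd h
  · exact Prod.ext (mul_comm s.1 t.1) (by simp [h])

namespace IsTransversal

variable [∀ i, Nontrivial (α i)] {N : M × FreeSum α →* ℕ} {n : ℕ}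
  {T : Set (M × FreeSum α)}

theorem injOn_snd (hT : IsTransversal N n T) : T.InjOn Prod.snd := fun t ht t' ht' h =>
  hT.2.2 t ht t' ht' (coreRel_prod_freeSum_iff.2 h)

theorem exists_snd_eq (hT : IsTransversal N n T) {s : M × FreeSum α} (hs : N s = n) :
    ∃ t ∈ T, t.2 = s.2 := by
  obtain ⟨t, ht, hst⟩ := hT.2.1 s hs
  exact ⟨t, ht, (coreRel_prod_freeSum_iff.1 hst).symm⟩

end IsTransversal

end Product

namespace IsGenScale

variable {M : Type*} [CommMonoid M] {I : Type*} [DecidableEq I] {α : I → Type*}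
  [∀ i, Nontrivial (α i)] {N : M × FreeSum α →* ℕ}

local notation "ι" => dsOf (fun i => FreeMonoid (α i))

theorem map_fst_eq_one (hN : IsGenScale N) (x : M) : N (x, 1) = 1 := by
  obtain ⟨⟨T, hT, -, hcard⟩, hacc⟩ := hN.2.2 _ ⟨(x, 1), rfl⟩
  obtain ⟨t, ht, ht1⟩ := hT.exists_snd_eq (s := (x, 1)) rfl
  have hcore : t ∈ core (M × FreeSum α) := by
    rw [core_prod_freeSum]
    exact ht1
  have hle : T.ncard ≤ 1 :=
    (Set.ncard_le_ncard ((hacc T hT).1.subset_singleton_of_mem_core ht hcore)).trans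
      (Set.ncard_singleton t).le
  have := hN.1 (x, 1)
  omega

theorem map_eq_map_snd (hN : IsGenScale N) (s : M × FreeSum α) : N s = N (1, s.2) := by
  conv_lhs => rw [show s = (s.1, 1) * (1, s.2) by simp]
  rw [map_mul, hN.map_fst_eq_one, one_mul]

theorem snd_eq_one_of_map_eq_one (hN : IsGenScale N) {s : M × FreeSum α} (hs : N s = 1) :
    s.2 = 1 := by
  obtain ⟨⟨T, hT, -, hcard⟩, hacc⟩ := hN.2.2 _ ⟨s, rfl⟩
  obtain ⟨t, rfl⟩ := Set.ncard_eq_one.1 (hcard.trans hs)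
  obtain ⟨t', rfl, hst⟩ := hT.exists_snd_eq rfl
  have hcore := (hacc _ hT).2.mem_core_of_singleton
  rw [core_prod_freeSum] at hcore
  rw [← hst]
  exact hcore

theorem snd_eq_dsOf_of_mem_transversal (hN : IsGenScale N) {i : I} {a₀ : α i}
    (hmin : ∀ c, N (1, ι i (of a₀)) ≤ N (1, ι i (of c))) {T : Set (M × FreeSum α)}
    (hT : IsTransversal N (N (1, ι i (of a₀))) T) (hacc : Accurate T) {t : M × FreeSum α}
    (ht : t ∈ T) : ∃ c, t.2 = ι i (of c) := by
  obtain ⟨t₀, ht₀, ht₀a⟩ := hT.exists_snd_eq rfl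
  have hne : word t.2 i ≠ [] := by
    intro hnil
    have htt₀ : t = t₀ := by_contra fun h => not_orth_dsOf_of_word_eq_nil hnil (of a₀) <| by
      simpa [orth_prod_iff_of_comm, ht₀a] using hacc t ht t₀ ht₀ h
    simp [htt₀, ht₀a, word_dsOf_self] at hnil
  obtain ⟨c, r, hcr⟩ := List.exists_cons_of_ne_nil hne
  obtain ⟨w, hw⟩ := exists_eq_dsOf_mul hcr
  have hsplit : N t = N (1, ι i (of c)) * N (1, w) := by
    rw [hN.map_eq_map_snd, hw, ← map_mul, Prod.mk_mul_mk, one_mul]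
  -- `N t = N c * N w`, while `N t ≤ N c` by minimality
  have hw1 : N (1, w) = 1 := by
    have := hT.1 t ht
    have := hmin c
    have := Nat.pos_of_ne_zero (hN.1 (1, w))
    have := Nat.pos_of_ne_zero (hN.1 (1, ι i (of a₀)))
    nlinarith
  exact ⟨c, by rw [hw, show w = 1 from hN.snd_eq_one_of_map_eq_one hw1, mul_one]⟩

theorem map_dsOf_of (hN : IsGenScale N) (i : I) (a : α i) :
    N (1, ι i (of a)) = Nat.card (α i) := by
  let f : α i → ℕ := fun c => N (1, ι i (of c))
  obtain ⟨⟨T, hT, -, hcard⟩, hacc⟩ := hN.2.2 _ ⟨(1, ι i (of (Function.argmin f))), rfl⟩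
  have hletters : ∀ t ∈ T, ∃ c, t.2 = ι i (of c) := fun t ht =>
    hN.snd_eq_dsOf_of_mem_transversal (fun c => Function.argmin_le f c) hT (hacc T hT).1 ht
  have hall : ∀ c, ∃ t ∈ T, t.2 = ι i (of c) := fun c => by
    obtain ⟨t, ht, hno⟩ := (hacc T hT).2.2 (1, ι i (of c))
    obtain ⟨b, hb⟩ := hletters t ht
    rw [orth_prod_iff_of_comm, hb] at hno
    exact ⟨t, ht, by rw [hb, eq_of_not_orth_dsOf_of hno]⟩
  have himage : Prod.snd '' T = Set.range fun c => ι i (of c) := by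
    ext w
    constructor
    · rintro ⟨t, ht, rfl⟩
      obtain ⟨c, hc⟩ := hletters t ht
      exact ⟨c, hc.symm⟩
    · rintro ⟨c, rfl⟩
      obtain ⟨t, ht, htc⟩ := hall c
      exact ⟨t, ht, htc⟩
  obtain ⟨t, ht, hta⟩ := hall a
  rw [← hta, ← hN.map_eq_map_snd, hT.1 t ht, ← hcard, ← hT.injOn_snd.ncard_image, himage,
    Set.ncard_range_of_injective (dsOf_of_injective i)]

theorem eq_lengthScale (hN : IsGenScale N) : N = lengthScale M α := by
  have h : N.comp (MonoidHom.inr M _) = (lengthScale M α).comp (MonoidHom.inr M _) :=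
    hom_ext fun i a => by
      simp only [MonoidHom.comp_apply, MonoidHom.inr_apply, hN.map_dsOf_of, lengthScale_dsOf,
        length_of, pow_one]
  exact MonoidHom.ext fun s => (hN.map_eq_map_snd s).trans (DFunLike.congr_fun h s.2)

end IsGenScale

section LengthScale

variable {M : Type*} [CommMonoid M] {I : Type*} {α : I → Type*}

theorem accurate_of_lengths_eq {T : Set (M × FreeSum α)} (hinj : T.InjOn Prod.snd)
    {k : I →₀ ℕ} (hk : ∀ t ∈ T, lengths t.2 = k) : Accurate T := fun t ht t' ht' hne =>
  orth_prod_iff_of_comm.2 <|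
    orth_of_lengths_eq ((hk t ht).trans (hk t' ht').symm) fun h => hne (hinj ht ht' h)

theorem isFoundationSet_of_lengths_eq [∀ i, Finite (α i)] [∀ i, Nonempty (α i)]
    {T : Set (M × FreeSum α)} (hinj : T.InjOn Prod.snd) {k : I →₀ ℕ}
    (hk : ∀ t ∈ T, lengths t.2 = k) (hsurj : ∀ w, lengths w = k → ∃ t ∈ T, t.2 = w) :
    IsFoundationSet T := by
  refine ⟨Set.Finite.of_finite_image ((finite_lengths_eq k).subset ?_) hinj, fun s => ?_⟩
  · rintro _ ⟨t, ht, rfl⟩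
    exact hk t ht
  · obtain ⟨t, ht, htw⟩ := hsurj _ (lengths_pad (fun _ => Classical.arbitrary _) k s.2)
    refine ⟨t, ht, ?_⟩
    rw [orth_prod_iff_of_comm, htw]
    exact not_orth_pad _ _ _

variable [DecidableEq I]

theorem isGenScale_lengthScale [Nonempty I] [∀ i, Finite (α i)] [∀ i, Nontrivial (α i)]
    (hinj : Function.Injective fun k : I →₀ ℕ => k.prod fun i e => Nat.card (α i) ^ e) :
    IsGenScale (lengthScale M α) := by
  refine ⟨fun s => Finset.prod_ne_zero_iff.2 fun i _ => pow_ne_zero _ Nat.card_pos.ne', ?_, ?_⟩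
  · obtain ⟨i⟩ := ‹Nonempty I›
    refine ⟨(1, dsOf (fun i => FreeMonoid (α i)) i (of (Classical.arbitrary _))), ?_⟩
    rw [lengthScale_dsOf, length_of, pow_one]
    exact Finite.one_lt_card.ne'
  rintro _ ⟨s, rfl⟩
  have hval : ∀ t, lengthScale M α t = lengthScale M α s ↔ lengths t.2 = lengths s.2 :=
    fun t => hinj.eq_iff
  refine ⟨⟨(1, ·) '' {w | lengths w = lengths s.2}, ⟨?_, ?_, ?_⟩, ?_, ?_⟩,
    fun T hT => ?_⟩
  · rintro _ ⟨w, hw, rfl⟩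
    exact (hval _).2 hw
  · intro t ht
    exact ⟨(1, t.2), ⟨t.2, (hval t).1 ht, rfl⟩, coreRel_prod_freeSum_iff.2 rfl⟩
  · rintro _ ⟨w, -, rfl⟩ _ ⟨w', -, rfl⟩ h
    exact congrArg _ (coreRel_prod_freeSum_iff.1 h)
  · exact (finite_lengths_eq _).image _
  · rw [Set.ncard_image_of_injective _ (Prod.mk_right_injective 1), ncard_lengths_eq]
    rfl
  have hk : ∀ t ∈ T, lengths t.2 = lengths s.2 := fun t ht => (hval t).1 (hT.1 t ht)
  exact ⟨accurate_of_lengths_eq hT.injOn_snd hk, isFoundationSet_of_lengths_eq hT.injOn_snd hk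
    fun w hw => hT.exists_snd_eq (s := (1, w)) ((hval _).2 hw)⟩

theorem injective_of_isGenScale_lengthScale [∀ i, Nontrivial (α i)]
    (h : IsGenScale (lengthScale M α)) :
    Function.Injective fun k : I →₀ ℕ => k.prod fun i e => Nat.card (α i) ^ e := by
  intro k k' hkk
  by_contra hne
  -- padding to the two profiles gives comparable, hence non-orthogonal, elements of equal scale
  -- in distinct classes, which an accurate transversal would have to separate
  let a : ∀ i, α i := fun _ => Classical.arbitrary _
  let w := pad a k 1
  let w' := pad a k' w
  have hww' : lengthScale M α (1, w') = lengthScale M α (1, w) := by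
    simp only [lengthScale_apply, w, w', lengths_pad]
    exact hkk.symm
  obtain ⟨⟨T, hT, -⟩, hacc⟩ := h.2.2 _ ⟨(1, w), rfl⟩
  obtain ⟨t, ht, htw⟩ := hT.exists_snd_eq (s := (1, w)) rfl
  obtain ⟨t', ht', htw'⟩ := hT.exists_snd_eq (s := (1, w')) hww'
  have htt' : t' ≠ t := fun htt' => hne <| by
    rw [← lengths_pad a k 1, ← lengths_pad a k' w]
    exact congrArg lengths (htw.symm.trans ((congrArg Prod.snd htt').symm.trans htw'))
  have horth := orth_prod_iff_of_comm.1 ((hacc T hT).1 t' ht' t ht htt')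
  rw [htw, htw'] at horth
  exact not_orth_pad a k' w horth

end LengthScale

/-- Proposition 4.6: `M ⊕ ⊕ᵢ F⁺_(mᵢ)` (with `M` free abelian) admits a generalised scale
iff `(mᵢ)` is rationally independent; in that case it is unique and restricts to the
unique generalised scale `w ↦ mᵢ ^ length w` on each `F⁺_(mᵢ)`. -/
theorem gen_scale_direct_sum_free_monoids {J I : Type*} [DecidableEq I] [Nonempty I]
    (m : I → ℕ) (hm : ∀ i, 2 ≤ m i) :
    ((∃ N : (Multiplicative (J →₀ ℕ) × ↥(finSupp (fun i => FreeMonoid (Fin (m i))))) →* ℕ, IsGenScale N) ↔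
      (∀ k k' : I →₀ ℕ,
        (k.prod fun i e => m i ^ e) = (k'.prod fun i e => m i ^ e) → k = k')) ∧
    (∀ N N' : (Multiplicative (J →₀ ℕ) × ↥(finSupp (fun i => FreeMonoid (Fin (m i))))) →* ℕ, IsGenScale N → IsGenScale N' → N = N') ∧
    (∀ N : (Multiplicative (J →₀ ℕ) × ↥(finSupp (fun i => FreeMonoid (Fin (m i))))) →* ℕ, IsGenScale N →
      ∀ (i : I) (w : FreeMonoid (Fin (m i))),
        N (1, dsOf (fun i => FreeMonoid (Fin (m i))) i w) = m i ^ w.length) := by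
  have : ∀ i, Nontrivial (Fin (m i)) := fun i => Fin.nontrivial_iff_two_le.2 (hm i)
  have hindep :
      (Function.Injective fun k : I →₀ ℕ => k.prod fun i e => Nat.card (Fin (m i)) ^ e) ↔
      ∀ k k' : I →₀ ℕ, (k.prod fun i e => m i ^ e) = (k'.prod fun i e => m i ^ e) → k = k' := by
    simp only [Nat.card_fin]
    rfl
  refine ⟨⟨fun ⟨N, hN⟩ => ?_, fun h => ⟨_, isGenScale_lengthScale (hindep.2 h)⟩⟩,
    fun N N' hN hN' => hN.eq_lengthScale.trans hN'.eq_lengthScale.symm, fun N hN i w => ?_⟩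
  · exact hindep.1 (injective_of_isGenScale_lengthScale (hN.eq_lengthScale ▸ hN))
  · rw [hN.eq_lengthScale, lengthScale_dsOf, Nat.card_fin]
end

section
/- Let Γ = (V,E) be a coconnected graph with |V| ≥ 2 and (S_v)_{v∈V} nontrivial right LCM monoids. Then for s,t ∈ S_Γ, s is core related to t (sa = tb for some a,b ∈ (S_Γ)_c) if and only if s ∈ tS_Γ*. -/
/-- The congruence on the free product implementing the graph product relations. -/
def graphProductCon {V : Type*} (G : SimpleGraph V) (S : V → Type*) [∀ v, Monoid (S v)] :
    Con (Monoid.CoprodI S) :=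
  conGen (fun x y => ∃ (v w : V) (s : S v) (t : S w), G.Adj v w ∧
    x = Monoid.CoprodI.of s * Monoid.CoprodI.of t ∧
    y = Monoid.CoprodI.of t * Monoid.CoprodI.of s)

/-- The graph product of a family of monoids over a graph. -/
def GraphProduct {V : Type*} (G : SimpleGraph V) (S : V → Type*) [∀ v, Monoid (S v)] :=
  (graphProductCon G S).Quotient

instance {V : Type*} (G : SimpleGraph V) (S : V → Type*) [∀ v, Monoid (S v)] :
    Monoid (GraphProduct G S) :=
  inferInstanceAs (Monoid (graphProductCon G S).Quotient)

/-- The quotient map from the free product onto the graph product. -/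
def GraphProduct.mk {V : Type*} (G : SimpleGraph V) (S : V → Type*) [∀ v, Monoid (S v)] :
    Monoid.CoprodI S →* GraphProduct G S := Con.mk' _

/-!
For each vertex `w` the graph product acts on `S w`: letters from `S w` by left multiplication,
letters at neighbours of `w` trivially, and letters at the remaining vertices trivially if they are
units and as the constant map to `1` otherwise. This respects the defining relations because in a
left cancellative (indeed Dedekind-finite) monoid the non-units form an ideal.

A non-unit `a` of the graph product factors as `u * p * r` with `u` a unit and `p` a non-unit
letter at some vertex `v`. Coconnectedness provides `w ≠ v` not adjacent to `v`; for `γ ≠ 1` in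
`S w`, the action on `1 ∈ S w` sends `a S` to `1` and `u γ p S` to `γ`, so these ideals are
disjoint and `a` is not in the core. Thus the core consists of units, and the core relation
reduces to right multiplication by a unit.
-/

section Core

variable {M : Type*} [Monoid M]

lemma IsUnit.mem_core {x : M} (hx : IsUnit x) : x ∈ core M := by
  rintro s hs
  have hmem : s ∈ pIdeal x ∩ pIdeal s :=
    ⟨⟨↑hx.unit⁻¹ * s, by simp [← mul_assoc]⟩, ⟨1, mul_one s⟩⟩
  rw [Orth] at hs
  rwa [hs] at hmem

lemma coreRel_iff_exists_isUnit (hcore : ∀ a ∈ core M, IsUnit a) (s t : M) :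
    coreRel s t ↔ ∃ x : M, IsUnit x ∧ s = t * x := by
  constructor
  · rintro ⟨a, ha, b, hb, hab⟩
    obtain ⟨a, rfl⟩ := hcore a ha
    refine ⟨b * ↑a⁻¹, (hcore b hb).mul a⁻¹.isUnit, ?_⟩
    rw [← mul_assoc, ← hab, Units.mul_inv_cancel_right]
  · rintro ⟨x, hx, rfl⟩
    exact ⟨1, isUnit_one.mem_core, x, hx.mem_core, mul_one _⟩

end Core

section NonunitsConst

variable {M X : Type*} [Monoid M] [IsDedekindFiniteMonoid M]

noncomputable def nonunitsConstHom (x₀ : X) : M →* Function.End X where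
  toFun g := open Classical in if IsUnit g then 1 else fun _ => x₀
  map_one' := if_pos isUnit_one
  map_mul' a b := by
    by_cases ha : IsUnit a <;> by_cases hb : IsUnit b <;>
      simp only [IsUnit.mul_iff, ha, hb, and_self, and_true, and_false, ↓reduceIte] <;> rfl

lemma nonunitsConstHom_of_isUnit (x₀ : X) {g : M} (hg : IsUnit g) :
    nonunitsConstHom x₀ g = 1 :=
  if_pos hg

lemma nonunitsConstHom_of_not_isUnit (x₀ : X) {g : M} (hg : ¬IsUnit g) :
    nonunitsConstHom x₀ g = fun _ => x₀ :=
  if_neg hg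

end NonunitsConst

namespace GraphProduct

variable {V : Type*} {G : SimpleGraph V} {S : V → Type*} [∀ v, Monoid (S v)]

def of {v : V} : S v →* GraphProduct G S := (GraphProduct.mk G S).comp Monoid.CoprodI.of

def lift {M : Type*} [Monoid M] (f : ∀ v, S v →* M)
    (hf : ∀ v w, G.Adj v w → ∀ (s : S v) (t : S w), Commute (f v s) (f w t)) :
    GraphProduct G S →* M :=
  (graphProductCon G S).lift (Monoid.CoprodI.lift f) <| Con.conGen_le.2 <| by
    rintro _ _ ⟨v, w, s, t, hvw, rfl, rfl⟩
    simpa [Con.ker_rel] using (hf v w hvw s t).eq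

@[simp]
lemma lift_of {M : Type*} [Monoid M] (f : ∀ v, S v →* M)
    (hf : ∀ v w, G.Adj v w → ∀ (s : S v) (t : S w), Commute (f v s) (f w t)) {v : V} (s : S v) :
    lift f hf (of s) = f v s :=
  Monoid.CoprodI.lift_of f s

@[elab_as_elim]
lemma induction_on {motive : GraphProduct G S → Prop} (x : GraphProduct G S) (one : motive 1)
    (of : ∀ v (s : S v), motive (of s)) (mul : ∀ x y, motive x → motive y → motive (x * y)) :
    motive x := by
  obtain ⟨x, rfl⟩ := Con.mk'_surjective (c := graphProductCon G S) x
  induction x using Monoid.CoprodI.induction_on with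
  | one => exact one
  | of v s => exact of v s
  | mul x y hx hy => exact mul _ _ hx hy

lemma isUnit_or_exists_nonunit_letter (x : GraphProduct G S) :
    IsUnit x ∨ ∃ u, IsUnit u ∧ ∃ v, ∃ p : S v, ¬IsUnit p ∧ ∃ r, x = u * of p * r := by
  induction x using induction_on with
  | one => exact .inl isUnit_one
  | of v s =>
    by_cases hs : IsUnit s
    · exact .inl (hs.map of)
    · exact .inr ⟨1, isUnit_one, v, s, hs, 1, by simp⟩
  | mul x y hx hy =>
    rcases hx with hx | ⟨u, hu, v, p, hp, r, rfl⟩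
    · rcases hy with hy | ⟨u, hu, v, p, hp, r, rfl⟩
      · exact .inl (hx.mul hy)
      · exact .inr ⟨x * u, hx.mul hu, v, p, hp, r, by simp only [mul_assoc]⟩
    · exact .inr ⟨u, hu, v, p, hp, r * y, by simp only [mul_assoc]⟩

section Action

variable (G) [∀ v, IsDedekindFiniteMonoid (S v)]

open Classical

noncomputable def vertexAction (w : V) : ∀ z, S z →* Function.End (S w) :=
  Function.update (fun z => if G.Adj z w then 1 else nonunitsConstHom 1) w MulAction.toEndHom

variable {G}

lemma vertexAction_self {w : V} (g c : S w) : vertexAction G w w g c = g * c := by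
  rw [vertexAction, Function.update_self]
  rfl

lemma vertexAction_of_adj {w z : V} (hzw : G.Adj z w) (g : S z) : vertexAction G w z g = 1 := by
  rw [vertexAction, Function.update_of_ne hzw.ne, if_pos hzw, MonoidHom.one_apply]

lemma vertexAction_of_not_adj {w z : V} (hne : z ≠ w) (hzw : ¬G.Adj z w) {g : S z}
    (hg : ¬IsUnit g) : vertexAction G w z g = fun _ => 1 := by
  rw [vertexAction, Function.update_of_ne hne, if_neg hzw, nonunitsConstHom_of_not_isUnit _ hg]

lemma vertexAction_eq_one_or_const {w z : V} (hne : z ≠ w) (g : S z) :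
    vertexAction G w z g = 1 ∨ vertexAction G w z g = fun _ => 1 := by
  by_cases hzw : G.Adj z w
  · exact .inl (vertexAction_of_adj hzw g)
  by_cases hg : IsUnit g
  · left
    rw [vertexAction, Function.update_of_ne hne, if_neg hzw, nonunitsConstHom_of_isUnit _ hg]
  · exact .inr (vertexAction_of_not_adj hne hzw hg)

lemma commute_vertexAction {w v₀ w₀ : V} (hadj : G.Adj v₀ w₀) (s : S v₀) (t : S w₀) :
    Commute (vertexAction G w v₀ s) (vertexAction G w w₀ t) := by
  by_cases hv : v₀ = w
  · subst hv
    rw [vertexAction_of_adj hadj.symm]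
    exact Commute.one_right _
  by_cases hw : w₀ = w
  · subst hw
    rw [vertexAction_of_adj hadj]
    exact Commute.one_left _
  rcases vertexAction_eq_one_or_const hv s with hs | hs <;>
    rcases vertexAction_eq_one_or_const hw t with ht | ht <;> rw [hs, ht] <;> rfl

variable (G) in
noncomputable def action (w : V) : GraphProduct G S →* Function.End (S w) :=
  lift (vertexAction G w) fun _ _ hadj => commute_vertexAction hadj

lemma action_mul_apply (w : V) (x y : GraphProduct G S) (c : S w) :
    action G w (x * y) c = action G w x (action G w y c) := by
  rw [map_mul]
  rfl

lemma action_of_self_apply {w : V} (g c : S w) : action G w (of g) c = g * c := by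
  rw [action, lift_of, vertexAction_self]

lemma action_of_mul_apply_of_not_isUnit {v w : V} (hne : v ≠ w) (hvw : ¬G.Adj v w) {p : S v}
    (hp : ¬IsUnit p) (y : GraphProduct G S) (c : S w) : action G w (of p * y) c = 1 := by
  rw [action_mul_apply, action, lift_of, vertexAction_of_not_adj hne hvw hp]

end Action

end GraphProduct

lemma SimpleGraph.Connected.exists_ne_not_adj_of_compl {V : Type*} [Nontrivial V]
    {G : SimpleGraph V} (hcc : Gᶜ.Connected) (v : V) : ∃ w, v ≠ w ∧ ¬G.Adj v w := by
  simpa only [SimpleGraph.compl_adj] using hcc.preconnected.exists_adj_of_nontrivial v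

namespace GraphProduct

variable {V : Type*} [Nontrivial V] {G : SimpleGraph V} {S : V → Type*} [∀ v, Monoid (S v)]
  [∀ v, Nontrivial (S v)] [∀ v, IsDedekindFiniteMonoid (S v)]

lemma isUnit_of_mem_core (hcc : Gᶜ.Connected) {a : GraphProduct G S}
    (ha : a ∈ core (GraphProduct G S)) : IsUnit a := by
  rcases isUnit_or_exists_nonunit_letter a with ha' | ⟨u, hu, v, p, hp, r, rfl⟩
  · exact ha'
  obtain ⟨w, hne, hvw⟩ := hcc.exists_ne_not_adj_of_compl v
  obtain ⟨γ, hγ⟩ := exists_ne (1 : S w)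
  refine absurd (Set.eq_empty_iff_forall_notMem.2 ?_) (ha (u * of γ * of p))
  rintro _ ⟨⟨x, rfl⟩, ⟨y, hy⟩⟩
  have key : of p * (r * x) = of γ * (of p * y) :=
    hu.mul_left_cancel (by simpa only [mul_assoc] using hy.symm)
  refine hγ ?_
  calc γ = γ * action G w (of p * y) 1 := by
        rw [action_of_mul_apply_of_not_isUnit hne hvw hp, mul_one]
    _ = action G w (of γ * (of p * y)) 1 := by rw [action_mul_apply _ (of γ), action_of_self_apply]
    _ = action G w (of p * (r * x)) 1 := by rw [key]
    _ = 1 := action_of_mul_apply_of_not_isUnit hne hvw hp _ _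

end GraphProduct

theorem coreRel_of_coconnected_graph_product_general {V : Type*} [Nontrivial V]
    (G : SimpleGraph V) (hcc : Gᶜ.Connected)
    (S : V → Type*) [∀ v, Monoid (S v)] [∀ v, Nontrivial (S v)]
    (hlc : ∀ v, LeftCancellative (S v)) :
    ∀ s t : GraphProduct G S,
      coreRel s t ↔ ∃ x : GraphProduct G S, IsUnit x ∧ s = t * x :=
  have (v : V) : IsLeftCancelMul (S v) := ⟨fun a _ _ => hlc v a _ _⟩
  coreRel_iff_exists_isUnit fun _ => GraphProduct.isUnit_of_mem_core hcc

/-- Theorem 3.2(ii): for a coconnected graph with at least two vertices and nontrivial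
right LCM vertex monoids, two elements of the graph product are core related iff they
differ by right multiplication by a unit. -/
theorem coreRel_of_coconnected_graph_product {V : Type*} [Countable V] [Nontrivial V]
    (G : SimpleGraph V) (hcc : Gᶜ.Connected)
    (S : V → Type*) [∀ v, Monoid (S v)] [∀ v, Nontrivial (S v)]
    (hlc : ∀ v, LeftCancellative (S v)) (hlcm : ∀ v, IsRightLCM (S v)) :
    ∀ s t : GraphProduct G S,
      coreRel s t ↔ ∃ x : GraphProduct G S, IsUnit x ∧ s = t * x :=
  coreRel_of_coconnected_graph_product_general G hcc S hlc
end

section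
/- For a graph Γ, the action α: (A⁺_Γ)_c ↷ A⁺_Γ/∼ (a·[s] := [as]) is almost free (every nontrivial core element has at most finitely many fixed classes) if and only if either Γ has no universal vertex, or every vertex of Γ is universal (i.e., A⁺_Γ is the free abelian monoid on V). -/
/-- The congruence on the free monoid on the vertices implementing the right-angled
Artin relations. -/
def raamCon {V : Type*} (G : SimpleGraph V) : Con (FreeMonoid V) :=
  conGen (fun x y => ∃ v w : V, G.Adj v w ∧
    x = FreeMonoid.of v * FreeMonoid.of w ∧ y = FreeMonoid.of w * FreeMonoid.of v)

/-- The right-angled Artin monoid of a graph. -/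
def RAAM {V : Type*} (G : SimpleGraph V) := (raamCon G).Quotient

instance {V : Type*} (G : SimpleGraph V) : Monoid (RAAM G) :=
  inferInstanceAs (Monoid (raamCon G).Quotient)

/-- The generator of `RAAM G` associated to a vertex. -/
def agen {V : Type*} (G : SimpleGraph V) (v : V) : RAAM G := (raamCon G).mk' (FreeMonoid.of v)

/-!
A central element `a` of a monoid lies in the core and fixes every class, since `a s · 1 = s · a`.
For a non-edge `{u, w}` of `Γ`, collapsing every other generator gives a surjection
`A⁺_Γ → {u, w}*` onto a free monoid of rank two; the core of such a free monoid is trivial, so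
this projection kills the core of `A⁺_Γ` and is therefore constant on `∼`-classes.

If `v` is universal and some `u, w` are not adjacent, the central generator `a_v ≠ 1` fixes the
classes of all `a_uⁿ`, which the projection separates: infinitely many fixed classes. If no
vertex is universal, the projections show that the core is trivial. If every vertex is universal,
`A⁺_Γ` is commutative and there is a single class.
-/

section Core

variable {S M : Type*} [Monoid S] [Monoid M]

theorem mem_core_of_forall_commute {a : S} (ha : ∀ t, Commute a t) : a ∈ core S := by
  intro s hOrth
  have hmem : a * s ∈ pIdeal a ∩ pIdeal s := ⟨⟨s, rfl⟩, ⟨a, (ha s).symm.eq⟩⟩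
  rw [hOrth] at hmem
  exact hmem

theorem coreRel_mul_left_of_forall_commute {a : S} (ha : ∀ t, Commute a t) (s : S) :
    coreRel (a * s) s :=
  ⟨1, mem_core_of_forall_commute (Commute.one_left ·), a, mem_core_of_forall_commute ha,
    by rw [mul_one, (ha s).eq]⟩

theorem MonoidHom.map_mem_core_of_surjective {f : S →* M} (hf : Function.Surjective f) {a : S}
    (ha : a ∈ core S) : f a ∈ core M := by
  intro m hOrth
  obtain ⟨s, rfl⟩ := hf m
  obtain ⟨_, ⟨r, rfl⟩, ⟨r', hr'⟩⟩ := Set.nonempty_iff_ne_empty.mpr (ha s)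
  have hmem : f (a * r) ∈ pIdeal (f a) ∩ pIdeal (f s) :=
    ⟨⟨f r, (map_mul f a r).symm⟩, ⟨f r', by simp only [← map_mul, hr']⟩⟩
  rw [hOrth] at hmem
  exact hmem

theorem MonoidHom.eq_of_coreRel {f : S →* M} (hf : ∀ a ∈ core S, f a = 1) {s t : S}
    (h : coreRel s t) : f s = f t := by
  obtain ⟨a, ha, b, hb, hab⟩ := h
  simpa [hf a ha, hf b hb] using congrArg f hab

end Core

theorem FreeMonoid.eq_one_of_mem_core {α : Type*} [Nontrivial α] {x : FreeMonoid α}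
    (hx : x ∈ core (FreeMonoid α)) : x = 1 := by
  induction x using FreeMonoid.casesOn with
  | one => rfl
  | of_mul c y =>
    obtain ⟨d, hdc⟩ := exists_ne c
    obtain ⟨_, ⟨r, rfl⟩, ⟨r', hr'⟩⟩ := Set.nonempty_iff_ne_empty.mpr (hx (of d))
    -- the two sides of `c y r = d r'` start with different letters
    have hhead := congrArg (List.head? ∘ toList) hr'
    simp [mul_assoc, hdc] at hhead

namespace RAAM

variable {V M : Type*} [Monoid M] {G : SimpleGraph V}

def lift (G : SimpleGraph V) (f : V → M) (hf : ∀ v w, G.Adj v w → Commute (f v) (f w)) :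
    RAAM G →* M :=
  Con.lift (raamCon G) (FreeMonoid.lift f) <| Con.conGen_le.mpr <| by
    rintro _ _ ⟨v, w, hvw, rfl, rfl⟩
    simpa using (hf v w hvw).eq

@[simp]
theorem lift_agen (f : V → M) (hf : ∀ v w, G.Adj v w → Commute (f v) (f w)) (v : V) :
    lift G f hf (agen G v) = f v :=
  rfl

@[elab_as_elim]
theorem induction_on {P : RAAM G → Prop} (a : RAAM G) (one : P 1)
    (agen_mul : ∀ v t, P t → P (agen G v * t)) : P a := by
  induction a using Con.induction_on with | H l => ?_
  induction l using FreeMonoid.inductionOn' with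
  | one => exact one
  | of_mul v l ih => exact agen_mul v _ ih

theorem exists_eq_agen_mul_of_ne_one {a : RAAM G} (ha : a ≠ 1) : ∃ v t, a = agen G v * t := by
  induction a using induction_on with
  | one => exact absurd rfl ha
  | agen_mul v t _ => exact ⟨v, t, rfl⟩

theorem commute_agen_agen {v w : V} (h : G.Adj v w) : Commute (agen G v) (agen G w) :=
  (Con.eq _).mpr (ConGen.Rel.of _ _ ⟨v, w, h, rfl, rfl⟩)

theorem commute_agen_of_universal {v : V} (hv : ∀ w, w ≠ v → G.Adj v w) (t : RAAM G) :
    Commute (agen G v) t := by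
  induction t using induction_on with
  | one => exact Commute.one_right _
  | agen_mul w t ih =>
    refine Commute.mul_right ?_ ih
    obtain rfl | hwv := eq_or_ne w v
    · exact Commute.refl _
    · exact commute_agen_agen (hv w hwv)

theorem commute_of_forall_universal (hall : ∀ v w : V, w ≠ v → G.Adj v w) (s t : RAAM G) :
    Commute s t := by
  induction s using induction_on with
  | one => exact Commute.one_left _
  | agen_mul v s ih => exact (commute_agen_of_universal (hall v) t).mul_left ih

open Classical in
/-- The projection onto the free monoid on `{u, w}`, with `u ↦ false` and `w ↦ true`; for
`u = w` it only counts the occurrences of `u`. -/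
noncomputable def proj (u w : V) (huw : ¬ G.Adj u w) : RAAM G →* FreeMonoid Bool :=
  lift G (fun x => if x = u then .of false else if x = w then .of true else 1) <| by
    intro x y hxy
    split_ifs <;> subst_vars <;> first
      | exact Commute.refl _ | exact Commute.one_left _ | exact Commute.one_right _
      | exact absurd hxy huw | exact absurd hxy.symm huw

variable {u w : V} {huw : ¬ G.Adj u w}

@[simp]
theorem proj_agen_left : proj u w huw (agen G u) = .of false := by
  simp [proj]

theorem proj_agen_right (hwu : w ≠ u) : proj u w huw (agen G w) = .of true := by
  simp [proj, hwu]

theorem proj_surjective (hwu : w ≠ u) : Function.Surjective (proj u w huw) := by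
  intro l
  induction l using FreeMonoid.inductionOn' with
  | one => exact ⟨1, map_one _⟩
  | of_mul b l ih =>
    obtain ⟨t, rfl⟩ := ih
    cases b
    · exact ⟨agen G u * t, by simp⟩
    · exact ⟨agen G w * t, by simp [proj_agen_right hwu]⟩

theorem proj_eq_one_of_mem_core (hwu : w ≠ u) {a : RAAM G} (ha : a ∈ core (RAAM G)) :
    proj u w huw a = 1 :=
  FreeMonoid.eq_one_of_mem_core ((proj u w huw).map_mem_core_of_surjective (proj_surjective hwu) ha)

theorem agen_ne_one (v : V) : agen G v ≠ 1 := fun h => by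
  simpa using congrArg (proj v v (G.irrefl (v := v))) h

theorem eq_one_of_mem_core (hG : ∀ v, ∃ w, w ≠ v ∧ ¬ G.Adj v w) {a : RAAM G}
    (ha : a ∈ core (RAAM G)) : a = 1 := by
  by_contra ha1
  obtain ⟨v, t, rfl⟩ := exists_eq_agen_mul_of_ne_one ha1
  obtain ⟨w, hwv, hvw⟩ := hG v
  have := proj_eq_one_of_mem_core (huw := hvw) hwv ha
  simp at this

theorem infinite_of_forall_coreRel_agen_pow (huw : ¬ G.Adj u w) (hwu : w ≠ u)
    {T : Set (RAAM G)} (hT : ∀ n : ℕ, ∃ t ∈ T, coreRel (agen G u ^ n) t) : T.Infinite := by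
  have hproj : ∀ n : ℕ, ∃ t ∈ T, proj u w huw t = .of false ^ n := fun n => by
    obtain ⟨t, htT, hrel⟩ := hT n
    refine ⟨t, htT, ?_⟩
    rw [← MonoidHom.eq_of_coreRel (fun a => proj_eq_one_of_mem_core hwu) hrel]
    simp
  have hpow : Function.Injective (fun n : ℕ => FreeMonoid.of false ^ n) := fun m n h => by
    simpa using congrArg (FreeMonoid.lift fun _ => Multiplicative.ofAdd (1 : ℕ)) h
  refine fun hfin => Set.infinite_range_of_injective hpow ((hfin.image (proj u w huw)).subset ?_)
  rintro _ ⟨n, rfl⟩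
  exact hproj n

end RAAM

theorem raam_core_action_almost_free_general {V : Type*} (G : SimpleGraph V) :
    (∀ a ∈ core (RAAM G), a ≠ 1 →
        ∃ T : Set (RAAM G), T.Finite ∧ ∀ s : RAAM G, coreRel (a * s) s → ∃ t ∈ T, coreRel s t) ↔
      ((¬ ∃ v : V, ∀ w : V, w ≠ v → G.Adj v w) ∨ (∀ v w : V, w ≠ v → G.Adj v w)) := by
  constructor
  · intro H
    by_contra! ⟨⟨v, hv⟩, u, w, hwu, huw⟩
    have hcentral := RAAM.commute_agen_of_universal hv
    obtain ⟨T, hTfin, hT⟩ :=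
      H _ (mem_core_of_forall_commute hcentral) (RAAM.agen_ne_one v)
    refine RAAM.infinite_of_forall_coreRel_agen_pow huw hwu (fun n => ?_) hTfin
    exact hT _ (coreRel_mul_left_of_forall_commute hcentral _)
  · rintro (hno | hall) a ha ha1
    · push Not at hno
      exact absurd (RAAM.eq_one_of_mem_core hno ha) ha1
    · refine ⟨{1}, Set.finite_singleton 1, fun s _ => ⟨1, rfl, ?_⟩⟩
      simpa using coreRel_mul_left_of_forall_commute (RAAM.commute_of_forall_universal hall s) 1

/-- Corollary 3.4(v): the action of the core of `A⁺_Γ` on core classes is almost free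
iff `Γ` has no universal vertex or every vertex of `Γ` is universal. -/
theorem raam_core_action_almost_free {V : Type*} [Countable V] (G : SimpleGraph V) :
    (∀ a ∈ core (RAAM G), a ≠ 1 →
        ∃ T : Set (RAAM G), T.Finite ∧ ∀ s : RAAM G, coreRel (a * s) s → ∃ t ∈ T, coreRel s t) ↔
      ((¬ ∃ v : V, ∀ w : V, w ≠ v → G.Adj v w) ∨ (∀ v w : V, w ≠ v → G.Adj v w)) :=
  raam_core_action_almost_free_general G
end
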